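/- Gevrey bound for the formal solution of the standard-form equation (scalar case). Fix an integer d ≥ 0 and a domain X₀ ⊆ ℂ^d. Let G_{km} (k, m ∈ ℕ) be holomorphic functions on X₀ and suppose there are constants A, B > 0 with |G_{km}(x)| ≤ A·B^{k+m}·k! for all k, m ∈ ℕ and all x ∈ X₀. Define holomorphic functions g_n : X₀ → ℂ by g₀ := 0 and, for n ≥ 0, g_{n+1}(x) := Σ_{k=0}^{n} Σ_{m=0}^{n−k} Σ_{i₁+⋯+i_m = n−k, i_j ≥ 0} G_{km}(x)·g_{i₁}(x)⋯g_{i_m}(x) (the coefficients of the unique formal power series solution of w = ℏ·Ĝ(x,ℏ,w) with Ĝ = Σ_{k,m} G_{km}(x)ℏᵏwᵐ). Then there exists a constant M > 0 such that |g_{n+1}(x)| ≤ M^{n+1}·n! for all n ∈ ℕ and all x ∈ X₀. In particular the formal Borel transform Σ_{n≥0} g_{n+1}(x)·ξⁿ/n! converges uniformly on X₀ for |ξ| < 1/M. -/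

import Mathlib

/-!
By strong induction, `‖g n‖ ≤ ε Mⁿ w(n)` with the weight `w(n) = (n-1)!/n²`. This weight satisfies
`∑_{a+b=s} w(a) w(b) ≤ 8 w(s)`, so the sum over compositions of `s` into `m + 1` parts of products
of weights is at most `8ᵐ w(s)`; with `k! w(s) ≤ 4^(k+1) w(k+s+1)`, the term `(k, m)` of the
recursion for `g (n+1)` is at most `2^-(k+m+2) ε M^(n+1) w(n+1)` once `ε ≲ 1/B` and
`M ≳ (A+1)/ε`, and these terms sum to at most `ε M^(n+1) w(n+1)`. The resulting bound
`‖g (n+1)‖ ≤ M^(n+1) n!` dominates the Borel series by the geometric series `∑ M (M‖ξ‖)ⁿ`.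
-/

open Complex Set Filter

noncomputable section

/-- A domain: a nonempty open connected set. -/
def IsCxDomain {E : Type*} [TopologicalSpace E] (U : Set E) : Prop :=
  IsOpen U ∧ IsConnected U

/-- The finite set of compositions of `j` into `m` (nonnegative) parts. -/
def comps (m j : ℕ) : Finset (Fin m → ℕ) :=
  (Fintype.piFinset fun _ : Fin m => Finset.range (j + 1)).filter fun t => ∑ i, t i = j

open Finset Nat

theorem mem_comps {m j : ℕ} {t : Fin m → ℕ} : t ∈ comps m j ↔ ∑ i, t i = j := by
  refine ⟨fun h => (mem_filter.mp h).2, fun h => mem_filter.mpr ⟨?_, h⟩⟩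
  refine Fintype.mem_piFinset.mpr fun i => mem_range.mpr (Nat.lt_succ_of_le ?_)
  exact h ▸ single_le_sum (fun _ _ => Nat.zero_le _) (mem_univ i)

section CompsSums

variable {R : Type*} [CommSemiring R]

theorem sum_comps_zero (f : ℕ → R) (r : ℕ) :
    ∑ t ∈ comps 0 r, ∏ j, f (t j) = if r = 0 then 1 else 0 := by
  split_ifs with hr
  · subst hr
    have : comps 0 0 = {Fin.elim0} :=
      eq_singleton_iff_unique_mem.mpr ⟨mem_comps.mpr rfl, fun _ _ => funext fun i => i.elim0⟩
    simp [this]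
  · have : comps 0 r = ∅ :=
      eq_empty_iff_forall_notMem.mpr fun t ht => hr (by simpa using (mem_comps.mp ht).symm)
    simp [this]

theorem sum_comps_succ (f : ℕ → R) (m s : ℕ) :
    ∑ t ∈ comps (m + 1) s, ∏ j, f (t j)
      = ∑ i ∈ range (s + 1), f i * ∑ t ∈ comps m (s - i), ∏ j, f (t j) := by
  simp_rw [mul_sum]
  rw [sum_sigma']
  refine sum_nbij' (fun t => ⟨t 0, Fin.tail t⟩) (fun p => Fin.cons p.1 p.2) ?_ ?_ ?_ ?_ ?_
  · intro t ht
    have hsum := mem_comps.mp ht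
    rw [Fin.sum_univ_succ] at hsum
    exact mem_sigma.mpr ⟨mem_range.mpr (by dsimp only; omega),
      mem_comps.mpr (by simp only [Fin.tail]; omega)⟩
  · rintro ⟨i, t⟩ hp
    simp only [mem_sigma, Finset.mem_range, mem_comps] at hp ⊢
    simp only [Fin.sum_univ_succ, Fin.cons_zero, Fin.cons_succ]
    omega
  · exact fun t _ => Fin.cons_self_tail t
  · exact fun p _ => by simp
  · exact fun t _ => by simp [Fin.prod_univ_succ, Fin.tail]

theorem sum_comps_prod_mul_pow_mul (c r : R) (f : ℕ → R) (m s : ℕ) :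
    ∑ t ∈ comps m s, ∏ j, c * r ^ t j * f (t j)
      = c ^ m * r ^ s * ∑ t ∈ comps m s, ∏ j, f (t j) := by
  rw [mul_sum]
  refine sum_congr rfl fun t ht => ?_
  rw [prod_mul_distrib, prod_mul_distrib, prod_const, Finset.card_univ, Fintype.card_fin,
    prod_pow_eq_pow_sum, mem_comps.mp ht]

end CompsSums

/-- `gevreyWeight 0 = 0` (division by zero), which matches `g 0 = 0`. -/
def gevreyWeight (i : ℕ) : ℝ := (i - 1)! / i ^ 2

theorem gevreyWeight_zero : gevreyWeight 0 = 0 := by simp [gevreyWeight]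

theorem gevreyWeight_nonneg (i : ℕ) : 0 ≤ gevreyWeight i := by unfold gevreyWeight; positivity

theorem gevreyWeight_succ (n : ℕ) : gevreyWeight (n + 1) = n ! / ((n : ℝ) + 1) ^ 2 := by
  simp [gevreyWeight]

theorem sum_range_inv_sq_le_two (s : ℕ) : ∑ j ∈ range s, ((j : ℝ) ^ 2)⁻¹ ≤ 2 := by
  have h : ∑ j ∈ Ioo 0 s, ((j : ℝ) ^ 2)⁻¹ = ∑ j ∈ range s, ((j : ℝ) ^ 2)⁻¹ :=
    sum_subset (fun j hj => Finset.mem_range.mpr (Finset.mem_Ioo.mp hj).2) fun j hj hj' => by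
      obtain rfl : j = 0 := by simp_all
      simp
  simpa [h] using sum_Ioo_inv_sq_le (α := ℝ) 0 s

theorem gevreyWeight_mul_le (j b : ℕ) :
    gevreyWeight j * gevreyWeight b
      ≤ 2 * gevreyWeight (j + b) * (((j : ℝ) ^ 2)⁻¹ + ((b : ℝ) ^ 2)⁻¹) := by
  rcases Nat.eq_zero_or_pos j with rfl | hj
  · rw [gevreyWeight_zero, zero_mul]
    exact mul_nonneg (mul_nonneg zero_le_two (gevreyWeight_nonneg _)) (by positivity)
  rcases Nat.eq_zero_or_pos b with rfl | hb
  · rw [gevreyWeight_zero, mul_zero]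
    exact mul_nonneg (mul_nonneg zero_le_two (gevreyWeight_nonneg _)) (by positivity)
  have hfact : ((j - 1)! * (b - 1)! : ℝ) ≤ (j + b - 1)! := by
    have hdvd := Nat.factorial_mul_factorial_dvd_factorial_add (j - 1) (b - 1)
    have hle : (j - 1 + (b - 1))! ≤ (j + b - 1)! := Nat.factorial_le (by omega)
    exact_mod_cast (Nat.le_of_dvd (Nat.factorial_pos _) hdvd).trans hle
  have hsq : ((j : ℝ) ^ 2 * (b : ℝ) ^ 2)⁻¹
      ≤ 2 / ((j : ℝ) + b) ^ 2 * (((j : ℝ) ^ 2)⁻¹ + ((b : ℝ) ^ 2)⁻¹) := by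
    have hj' : (0 : ℝ) < j := by exact_mod_cast hj
    have hb' : (0 : ℝ) < b := by exact_mod_cast hb
    rw [← sub_nonneg]
    have : 2 / ((j : ℝ) + b) ^ 2 * (((j : ℝ) ^ 2)⁻¹ + ((b : ℝ) ^ 2)⁻¹)
        - ((j : ℝ) ^ 2 * (b : ℝ) ^ 2)⁻¹ = ((j : ℝ) - b) ^ 2 / ((j + b) ^ 2 * j ^ 2 * b ^ 2) := by
      field_simp
      ring
    rw [this]
    positivity
  calc gevreyWeight j * gevreyWeight b
      = ((j - 1)! * (b - 1)! : ℝ) * ((j : ℝ) ^ 2 * (b : ℝ) ^ 2)⁻¹ := by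
        simp only [gevreyWeight]; ring
    _ ≤ (j + b - 1)! * (2 / ((j : ℝ) + b) ^ 2 * (((j : ℝ) ^ 2)⁻¹ + ((b : ℝ) ^ 2)⁻¹)) := by
        gcongr
    _ = 2 * gevreyWeight (j + b) * (((j : ℝ) ^ 2)⁻¹ + ((b : ℝ) ^ 2)⁻¹) := by
        simp only [gevreyWeight, Nat.cast_add]; ring

theorem sum_gevreyWeight_mul_le (s : ℕ) :
    ∑ j ∈ range (s + 1), gevreyWeight j * gevreyWeight (s - j) ≤ 8 * gevreyWeight s := by
  have hreflect : ∑ j ∈ range (s + 1), (((s - j : ℕ) : ℝ) ^ 2)⁻¹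
      = ∑ j ∈ range (s + 1), ((j : ℝ) ^ 2)⁻¹ :=
    sum_range_reflect (fun j => ((j : ℝ) ^ 2)⁻¹) (s + 1)
  calc ∑ j ∈ range (s + 1), gevreyWeight j * gevreyWeight (s - j)
      ≤ ∑ j ∈ range (s + 1),
          2 * gevreyWeight s * (((j : ℝ) ^ 2)⁻¹ + (((s - j : ℕ) : ℝ) ^ 2)⁻¹) := by
        refine sum_le_sum fun j hj => ?_
        have hjs : j + (s - j) = s := by have := Finset.mem_range.mp hj; omega
        simpa only [hjs] using gevreyWeight_mul_le j (s - j)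
    _ = 2 * gevreyWeight s * (2 * ∑ j ∈ range (s + 1), ((j : ℝ) ^ 2)⁻¹) := by
        rw [← mul_sum, sum_add_distrib, hreflect]; ring
    _ ≤ 2 * gevreyWeight s * (2 * 2) := by
        gcongr
        · exact mul_nonneg zero_le_two (gevreyWeight_nonneg s)
        · exact sum_range_inv_sq_le_two _
    _ = 8 * gevreyWeight s := by ring

theorem sum_comps_prod_gevreyWeight_le (m s : ℕ) :
    ∑ t ∈ comps (m + 1) s, ∏ j, gevreyWeight (t j) ≤ 8 ^ m * gevreyWeight s := by
  induction m generalizing s with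
  | zero =>
    rw [sum_comps_succ, pow_zero, one_mul, sum_eq_single_of_mem s (self_mem_range_succ s)]
    · rw [sum_comps_zero, Nat.sub_self, if_pos rfl, mul_one]
    · intro i hi hne
      have : s - i ≠ 0 := by have := Finset.mem_range.mp hi; omega
      rw [sum_comps_zero, if_neg this, mul_zero]
  | succ m ih =>
    rw [sum_comps_succ]
    calc ∑ i ∈ range (s + 1), gevreyWeight i * ∑ t ∈ comps (m + 1) (s - i), ∏ j, gevreyWeight (t j)
        ≤ ∑ i ∈ range (s + 1), gevreyWeight i * (8 ^ m * gevreyWeight (s - i)) := by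
          gcongr with i
          · exact gevreyWeight_nonneg i
          · exact ih _
      _ = 8 ^ m * ∑ i ∈ range (s + 1), gevreyWeight i * gevreyWeight (s - i) := by
          rw [mul_sum]; exact sum_congr rfl fun i _ => by ring
      _ ≤ 8 ^ m * (8 * gevreyWeight s) := by gcongr; exact sum_gevreyWeight_mul_le s
      _ = 8 ^ (m + 1) * gevreyWeight s := by ring

theorem succ_sq_le_four_pow (n : ℕ) : ((n : ℝ) + 1) ^ 2 ≤ 4 ^ n := by
  have h : (n : ℝ) + 1 ≤ 2 ^ n := by exact_mod_cast Nat.lt_two_pow_self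
  calc ((n : ℝ) + 1) ^ 2 ≤ (2 ^ n) ^ 2 := by gcongr
    _ = 4 ^ n := by rw [← pow_mul, mul_comm, pow_mul]; norm_num

theorem factorial_le_four_pow_mul_gevreyWeight (n : ℕ) :
    (n ! : ℝ) ≤ 4 ^ n * gevreyWeight (n + 1) := by
  rw [gevreyWeight_succ, mul_div_assoc', le_div_iff₀ (by positivity), mul_comm]
  gcongr
  exact succ_sq_le_four_pow n

theorem factorial_mul_gevreyWeight_le (k s : ℕ) :
    (k ! : ℝ) * gevreyWeight s ≤ 4 ^ (k + 1) * gevreyWeight (k + s + 1) := by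
  rcases s with _ | s
  · rw [gevreyWeight_zero, mul_zero]
    exact mul_nonneg (by positivity) (gevreyWeight_nonneg _)
  have hfact : (k ! * s ! : ℝ) ≤ (k + s + 1)! := by
    have := Nat.le_of_dvd (Nat.factorial_pos _) (Nat.factorial_mul_factorial_dvd_factorial_add k s)
    exact_mod_cast this.trans (Nat.factorial_le (Nat.le_succ _))
  have hsq : ((k : ℝ) + s + 1 + 1) ^ 2 ≤ 4 ^ (k + 1) * ((s : ℝ) + 1) ^ 2 := by
    have hlin : (k : ℝ) + s + 1 + 1 ≤ 2 * ((k : ℝ) + 1) * ((s : ℝ) + 1) := by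
      nlinarith [(k.cast_nonneg : (0 : ℝ) ≤ k), (s.cast_nonneg : (0 : ℝ) ≤ s)]
    calc ((k : ℝ) + s + 1 + 1) ^ 2 ≤ (2 * ((k : ℝ) + 1) * ((s : ℝ) + 1)) ^ 2 := by gcongr
      _ = 4 * ((k : ℝ) + 1) ^ 2 * ((s : ℝ) + 1) ^ 2 := by ring
      _ ≤ 4 * 4 ^ k * ((s : ℝ) + 1) ^ 2 := by gcongr; exact succ_sq_le_four_pow k
      _ = 4 ^ (k + 1) * ((s : ℝ) + 1) ^ 2 := by ring
  rw [show k + (s + 1) + 1 = (k + s + 1) + 1 by ring, gevreyWeight_succ, gevreyWeight_succ,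
    mul_div_assoc', mul_div_assoc', div_le_div_iff₀ (by positivity) (by positivity)]
  push_cast
  calc (k ! : ℝ) * s ! * ((k : ℝ) + s + 1 + 1) ^ 2
      ≤ (k + s + 1)! * (4 ^ (k + 1) * ((s : ℝ) + 1) ^ 2) := by gcongr
    _ = 4 ^ (k + 1) * (k + s + 1)! * ((s : ℝ) + 1) ^ 2 := by ring

theorem sum_range_sum_range_half_pow_le (n : ℕ) :
    ∑ k ∈ range (n + 1), ∑ m ∈ range (n - k + 1), (1 / 2 : ℝ) ^ (k + m + 2) ≤ 1 := by
  calc ∑ k ∈ range (n + 1), ∑ m ∈ range (n - k + 1), (1 / 2 : ℝ) ^ (k + m + 2)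
      = 1 / 4 * ∑ k ∈ range (n + 1), (1 / 2 : ℝ) ^ k * ∑ m ∈ range (n - k + 1), (1 / 2) ^ m := by
        simp_rw [mul_sum, pow_add]
        exact sum_congr rfl fun k _ => sum_congr rfl fun m _ => by ring
    _ ≤ 1 / 4 * ∑ k ∈ range (n + 1), (1 / 2 : ℝ) ^ k * 2 := by
        gcongr; exact sum_geometric_two_le _
    _ ≤ 1 / 4 * (2 * 2) := by
        rw [← sum_mul, mul_comm _ (2 : ℝ)]; gcongr; exact sum_geometric_two_le _
    _ = 1 := by norm_num

/-- Constants for which `n ↦ ε * M ^ n * gevreyWeight n` majorizes the recursion: each term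
`(k, m)` of the recursion for index `n + 1` is then at most `2 ^ (-(k + m + 2))` times it. -/
structure GevreyConstants (A B ε M : ℝ) : Prop where
  A_nonneg : 0 ≤ A
  B_nonneg : 0 ≤ B
  ε_nonneg : 0 ≤ ε
  sixteen_ε_B_le : 16 * ε * B ≤ 1
  eight_B_le : 8 * B ≤ M
  four_A_le : 4 * A ≤ ε * M
  thirtytwo_A_B_le : 32 * A * B ≤ M

namespace GevreyConstants

variable {A B ε M : ℝ}

theorem M_nonneg (h : GevreyConstants A B ε M) : 0 ≤ M := by
  linarith [h.eight_B_le, h.B_nonneg]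

theorem of_nonneg (hA : 0 ≤ A) (hB : 0 ≤ B) :
    GevreyConstants A B (16 * B + 1)⁻¹ (4 * (A + 1) * (16 * B + 1)) := by
  have hε : (16 * B + 1)⁻¹ * (4 * (A + 1) * (16 * B + 1)) = 4 * (A + 1) := by
    field_simp
  refine ⟨hA, hB, by positivity, ?_, by nlinarith, by rw [hε]; linarith, by nlinarith⟩
  rw [mul_comm 16, mul_assoc, inv_mul_le_one₀ (by positivity)]
  linarith

theorem diagonal_term_le (h : GevreyConstants A B ε M) (n : ℕ) :
    A * B ^ n * n ! ≤ ε * M ^ (n + 1) * gevreyWeight (n + 1) * (1 / 2) ^ (n + 2) := by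
  have hA := h.A_nonneg
  have hB := h.B_nonneg
  have hw := gevreyWeight_nonneg (n + 1)
  have hAM : A ≤ ε * M / 4 := by linarith [h.four_A_le]
  have hBM : 4 * B ≤ M / 2 := by linarith [h.eight_B_le]
  have hεM : 0 ≤ ε * M / 4 := hA.trans hAM
  calc A * B ^ n * n ! ≤ A * B ^ n * (4 ^ n * gevreyWeight (n + 1)) :=
        mul_le_mul_of_nonneg_left (factorial_le_four_pow_mul_gevreyWeight n) (by positivity)
    _ = A * (4 * B) ^ n * gevreyWeight (n + 1) := by ring
    _ ≤ (ε * M / 4) * (M / 2) ^ n * gevreyWeight (n + 1) := by gcongr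
    _ = ε * M ^ (n + 1) * gevreyWeight (n + 1) * (1 / 2) ^ (n + 2) := by ring

theorem offDiagonal_term_le (h : GevreyConstants A B ε M) (k m s : ℕ) :
    A * B ^ (k + (m + 1)) * k ! * (ε ^ (m + 1) * M ^ s * (8 ^ m * gevreyWeight s))
      ≤ ε * M ^ (k + s + 1) * gevreyWeight (k + s + 1) * (1 / 2) ^ (k + (m + 1) + 2) := by
  have hA := h.A_nonneg
  have hB := h.B_nonneg
  have hε := h.ε_nonneg
  have hM := h.M_nonneg
  have hw := gevreyWeight_nonneg (k + s + 1)
  have hhead : A * (4 * B) ^ (k + 1) ≤ M / 8 * (M / 2) ^ k := by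
    have hAB : A * (4 * B) ≤ M / 8 := by linarith [h.thirtytwo_A_B_le]
    have hBM : 4 * B ≤ M / 2 := by linarith [h.eight_B_le]
    rw [_root_.pow_succ', ← mul_assoc]
    gcongr
  calc A * B ^ (k + (m + 1)) * k ! * (ε ^ (m + 1) * M ^ s * (8 ^ m * gevreyWeight s))
      = A * B ^ (k + (m + 1)) * ε ^ (m + 1) * M ^ s * 8 ^ m * (k ! * gevreyWeight s) := by ring
    _ ≤ A * B ^ (k + (m + 1)) * ε ^ (m + 1) * M ^ s * 8 ^ m
          * (4 ^ (k + 1) * gevreyWeight (k + s + 1)) :=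
        mul_le_mul_of_nonneg_left (factorial_mul_gevreyWeight_le k s) (by positivity)
    _ = A * (4 * B) ^ (k + 1) * (8 * ε * B) ^ m * (ε * M ^ s * gevreyWeight (k + s + 1)) := by
        ring
    _ ≤ M / 8 * (M / 2) ^ k * (1 / 2) ^ m * (ε * M ^ s * gevreyWeight (k + s + 1)) := by
        have hεB : 8 * ε * B ≤ 1 / 2 := by linarith [h.sixteen_ε_B_le]
        gcongr
    _ = ε * M ^ (k + s + 1) * gevreyWeight (k + s + 1) * (1 / 2) ^ (k + (m + 1) + 2) := by ring

theorem term_le (h : GevreyConstants A B ε M) {k n : ℕ} (hk : k ≤ n) (m : ℕ) :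
    A * B ^ (k + m) * k ! *
        (ε ^ m * M ^ (n - k) * ∑ t ∈ comps m (n - k), ∏ j, gevreyWeight (t j))
      ≤ ε * M ^ (n + 1) * gevreyWeight (n + 1) * (1 / 2) ^ (k + m + 2) := by
  obtain ⟨s, rfl⟩ := Nat.exists_eq_add_of_le hk
  rw [Nat.add_sub_cancel_left]
  rcases m with _ | m
  · rw [sum_comps_zero]
    split_ifs with hs
    · subst hs
      simpa using h.diagonal_term_le k
    · have := h.ε_nonneg; have := h.M_nonneg; have := gevreyWeight_nonneg (k + s + 1)
      rw [mul_zero, mul_zero]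
      positivity
  · calc _ ≤ A * B ^ (k + (m + 1)) * k ! * (ε ^ (m + 1) * M ^ s * (8 ^ m * gevreyWeight s)) := by
          have := h.A_nonneg; have := h.B_nonneg; have := h.ε_nonneg; have := h.M_nonneg
          gcongr
          exact sum_comps_prod_gevreyWeight_le m s
      _ ≤ _ := h.offDiagonal_term_le k m s

theorem supersolution (h : GevreyConstants A B ε M) (n : ℕ) :
    ∑ k ∈ range (n + 1), ∑ m ∈ range (n - k + 1), ∑ t ∈ comps m (n - k),
        A * B ^ (k + m) * k ! * ∏ j, ε * M ^ t j * gevreyWeight (t j)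
      ≤ ε * M ^ (n + 1) * gevreyWeight (n + 1) := by
  simp_rw [← mul_sum, sum_comps_prod_mul_pow_mul]
  calc _ ≤ ∑ k ∈ range (n + 1), ∑ m ∈ range (n - k + 1),
          ε * M ^ (n + 1) * gevreyWeight (n + 1) * (1 / 2) ^ (k + m + 2) :=
        sum_le_sum fun k hk => sum_le_sum fun m _ =>
          h.term_le (Nat.lt_succ_iff.mp (Finset.mem_range.mp hk)) m
    _ ≤ ε * M ^ (n + 1) * gevreyWeight (n + 1) * 1 := by
        simp_rw [← mul_sum]
        exact mul_le_mul_of_nonneg_left (sum_range_sum_range_half_pow_le n)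
          (mul_nonneg (mul_nonneg h.ε_nonneg (pow_nonneg h.M_nonneg _)) (gevreyWeight_nonneg _))
    _ = ε * M ^ (n + 1) * gevreyWeight (n + 1) := mul_one _

end GevreyConstants

theorem norm_le_of_standardForm_rec {R : Type*} [NormedCommRing R] [NormOneClass R]
    {G : ℕ → ℕ → R} {g : ℕ → R} {b : ℕ → ℕ → ℝ} {u : ℕ → ℝ}
    (hG : ∀ k m, ‖G k m‖ ≤ b k m) (hg0 : ‖g 0‖ ≤ u 0)
    (hg : ∀ n, g (n + 1) = ∑ k ∈ range (n + 1), ∑ m ∈ range (n - k + 1),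
      ∑ t ∈ comps m (n - k), G k m * ∏ j, g (t j))
    (hu : ∀ n, ∑ k ∈ range (n + 1), ∑ m ∈ range (n - k + 1),
      ∑ t ∈ comps m (n - k), b k m * ∏ j, u (t j) ≤ u (n + 1))
    (n : ℕ) : ‖g n‖ ≤ u n := by
  induction n using Nat.strong_induction_on with
  | _ n ih =>
  rcases n with _ | n
  · exact hg0
  have hterm : ∀ k m, ∀ t ∈ comps m (n - k), ‖G k m * ∏ j, g (t j)‖ ≤ b k m * ∏ j, u (t j) := by
    intro k m t ht
    have hlt : ∀ j, t j < n + 1 := fun j => by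
      have := single_le_sum (fun i _ => Nat.zero_le (t i)) (mem_univ j)
      rw [mem_comps.mp ht] at this
      omega
    calc ‖G k m * ∏ j, g (t j)‖ ≤ ‖G k m‖ * ∏ j, ‖g (t j)‖ :=
          (norm_mul_le _ _).trans (mul_le_mul_of_nonneg_left (Finset.norm_prod_le _ _)
            (norm_nonneg _))
      _ ≤ b k m * ∏ j, u (t j) :=
          mul_le_mul (hG k m) (prod_le_prod (fun _ _ => norm_nonneg _) fun j _ => ih _ (hlt j))
            (prod_nonneg fun _ _ => norm_nonneg _) ((norm_nonneg _).trans (hG k m))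
  calc ‖g (n + 1)‖
      ≤ ∑ k ∈ range (n + 1), ∑ m ∈ range (n - k + 1),
          ∑ t ∈ comps m (n - k), ‖G k m * ∏ j, g (t j)‖ := by
        rw [hg]
        refine (norm_sum_le _ _).trans (sum_le_sum fun k _ => ?_)
        exact (norm_sum_le _ _).trans (sum_le_sum fun m _ => norm_sum_le _ _)
    _ ≤ ∑ k ∈ range (n + 1), ∑ m ∈ range (n - k + 1),
          ∑ t ∈ comps m (n - k), b k m * ∏ j, u (t j) :=
        sum_le_sum fun k _ => sum_le_sum fun m _ => sum_le_sum (hterm k m)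
    _ ≤ u (n + 1) := hu n

theorem norm_le_pow_mul_factorial_of_standardForm_rec {R : Type*} [NormedCommRing R]
    [NormOneClass R] {G : ℕ → ℕ → R} {g : ℕ → R} {A B : ℝ} (hA : 0 ≤ A) (hB : 0 ≤ B)
    (hG : ∀ k m, ‖G k m‖ ≤ A * B ^ (k + m) * k !) (hg0 : g 0 = 0)
    (hg : ∀ n, g (n + 1) = ∑ k ∈ range (n + 1), ∑ m ∈ range (n - k + 1),
      ∑ t ∈ comps m (n - k), G k m * ∏ j, g (t j))
    (n : ℕ) : ‖g (n + 1)‖ ≤ (4 * (A + 1) * (16 * B + 1)) ^ (n + 1) * n ! := by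
  set M := 4 * (A + 1) * (16 * B + 1)
  have hc := GevreyConstants.of_nonneg hA hB
  have hmajor := norm_le_of_standardForm_rec (u := fun n => (16 * B + 1)⁻¹ * M ^ n * gevreyWeight n)
    hG (by simp [hg0, gevreyWeight_zero]) hg hc.supersolution (n + 1)
  have hε : (16 * B + 1)⁻¹ ≤ 1 := inv_le_one_of_one_le₀ (by linarith)
  have hw : gevreyWeight (n + 1) ≤ n ! := by
    rw [gevreyWeight_succ]
    exact div_le_self (by positivity) (one_le_pow₀ (by linarith [n.cast_nonneg (α := ℝ)]))
  have := hc.M_nonneg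
  have := gevreyWeight_nonneg (n + 1)
  calc ‖g (n + 1)‖ ≤ (16 * B + 1)⁻¹ * M ^ (n + 1) * gevreyWeight (n + 1) := hmajor
    _ ≤ 1 * M ^ (n + 1) * n ! := by gcongr
    _ = M ^ (n + 1) * n ! := by rw [one_mul]

theorem tendstoUniformlyOn_borel_of_norm_le {𝕜 α : Type*} [RCLike 𝕜] {f : ℕ → α → 𝕜}
    {s : Set α} {M : ℝ} (hf : ∀ n, ∀ x ∈ s, ‖f n x‖ ≤ M ^ (n + 1) * n !) {ξ : 𝕜}
    (hξ : ‖ξ‖ < 1 / M) :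
    TendstoUniformlyOn (fun N x => ∑ n ∈ range N, ξ ^ n / (n ! : 𝕜) * f n x)
      (fun x => ∑' n, ξ ^ n / (n ! : 𝕜) * f n x) atTop s := by
  have hM : 0 < M := one_div_pos.mp ((norm_nonneg ξ).trans_lt hξ)
  have hξM : ‖ξ‖ * M < 1 := (lt_div_iff₀ hM).mp hξ
  refine tendstoUniformlyOn_tsum_nat
    ((summable_geometric_of_lt_one (by positivity) hξM).mul_left M) fun n x hx => ?_
  calc ‖ξ ^ n / (n ! : 𝕜) * f n x‖ = ‖ξ‖ ^ n / n ! * ‖f n x‖ := by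
        rw [norm_mul, norm_div, norm_pow, RCLike.norm_natCast]
    _ ≤ ‖ξ‖ ^ n / n ! * (M ^ (n + 1) * n !) := by gcongr; exact hf n x hx
    _ = M * (‖ξ‖ * M) ^ n := by
        field_simp
        ring

theorem gevrey_bound_standard_form_scalar_general
    {d : ℕ}
    (X₀ : Set (Fin d → ℂ))
    (Gkm : ℕ → ℕ → (Fin d → ℂ) → ℂ)
    (A B : ℝ) (hA : 0 < A) (hB : 0 < B)
    (hbd : ∀ k m : ℕ, ∀ x ∈ X₀, ‖Gkm k m x‖ ≤ A * B ^ (k + m) * k.factorial)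
    (g : ℕ → (Fin d → ℂ) → ℂ)
    (hg0 : ∀ x, g 0 x = 0)
    (hgrec : ∀ n : ℕ, ∀ x ∈ X₀, g (n + 1) x =
      ∑ k ∈ Finset.range (n + 1), ∑ m ∈ Finset.range (n - k + 1),
        ∑ t ∈ comps m (n - k), Gkm k m x * ∏ j, g (t j) x) :
    ∃ M > (0 : ℝ),
      (∀ n : ℕ, ∀ x ∈ X₀, ‖g (n + 1) x‖ ≤ M ^ (n + 1) * n.factorial) ∧
      (∀ ξ : ℂ, ‖ξ‖ < 1 / M →
        TendstoUniformlyOn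
          (fun (N : ℕ) (x : Fin d → ℂ) =>
            ∑ n ∈ Finset.range N, ξ ^ n / (n.factorial : ℂ) * g (n + 1) x)
          (fun x => ∑' n : ℕ, ξ ^ n / (n.factorial : ℂ) * g (n + 1) x)
          atTop X₀) := by
  have hbound : ∀ n, ∀ x ∈ X₀, ‖g (n + 1) x‖ ≤ (4 * (A + 1) * (16 * B + 1)) ^ (n + 1) * n ! :=
    fun n x hx => norm_le_pow_mul_factorial_of_standardForm_rec (g := fun n => g n x) hA.le hB.le
      (fun k m => hbd k m x hx) (hg0 x) (fun n => hgrec n x hx) n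
  exact ⟨_, by positivity, hbound, fun ξ hξ => tendstoUniformlyOn_borel_of_norm_le hbound hξ⟩

/-- **Gevrey bound for the formal solution of the standard-form equation (scalar case).**
If `|G_{km}(x)| ≤ A·B^{k+m}·k!` on `X₀` and `g₀ = 0`,
`g_{n+1} = Σ_{k=0}^{n} Σ_{m=0}^{n−k} Σ_{i₁+⋯+i_m=n−k} G_{km}·g_{i₁}⋯g_{i_m}`, then there
is `M > 0` with `|g_{n+1}(x)| ≤ M^{n+1}·n!` on `X₀`; in particular the formal Borel
transform `Σ_n g_{n+1}(x)·ξⁿ/n!` converges uniformly on `X₀` for `|ξ| < 1/M`. -/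
theorem gevrey_bound_standard_form_scalar
    {d : ℕ}
    (X₀ : Set (Fin d → ℂ)) (hX₀ : IsCxDomain X₀)
    (Gkm : ℕ → ℕ → (Fin d → ℂ) → ℂ)
    (hGkmhol : ∀ k m, DifferentiableOn ℂ (Gkm k m) X₀)
    (A B : ℝ) (hA : 0 < A) (hB : 0 < B)
    (hbd : ∀ k m : ℕ, ∀ x ∈ X₀, ‖Gkm k m x‖ ≤ A * B ^ (k + m) * k.factorial)
    (g : ℕ → (Fin d → ℂ) → ℂ)
    (hghol : ∀ n, DifferentiableOn ℂ (g n) X₀)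
    (hg0 : ∀ x, g 0 x = 0)
    (hgrec : ∀ n : ℕ, ∀ x ∈ X₀, g (n + 1) x =
      ∑ k ∈ Finset.range (n + 1), ∑ m ∈ Finset.range (n - k + 1),
        ∑ t ∈ comps m (n - k), Gkm k m x * ∏ j, g (t j) x) :
    ∃ M > (0 : ℝ),
      (∀ n : ℕ, ∀ x ∈ X₀, ‖g (n + 1) x‖ ≤ M ^ (n + 1) * n.factorial) ∧
      (∀ ξ : ℂ, ‖ξ‖ < 1 / M →
        TendstoUniformlyOn
          (fun (N : ℕ) (x : Fin d → ℂ) =>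
            ∑ n ∈ Finset.range N, ξ ^ n / (n.factorial : ℂ) * g (n + 1) x)
          (fun x => ∑' n : ℕ, ξ ^ n / (n.factorial : ℂ) * g (n + 1) x)
          atTop X₀) :=
  gevrey_bound_standard_form_scalar_general X₀ Gkm A B hA hB hbd g hg0 hgrec
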